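/- arXiv:2601.22356 — 2 statements merged into one kernel-verified Lean document; each statement's English description precedes it below -/
import Mathlib

section
/- Feasibility of sequential projection under pairwise compatibility: let A₁, …, A_N ∈ ℝ^m be nonzero vectors with ⟨Aᵢ, Aⱼ⟩ ≥ 0 for all i ≠ j, let c₁, …, c_N ∈ ℝ, with halfspaces Hᵢ and projection operators Πᵢ as below. Define iterates u⁽⁰⁾ = u and u⁽ᵏ⁾ = Π_{σ(k)}(u⁽ᵏ⁻¹⁾) for k = 1, …, N, where σ is any enumeration (permutation) of {1, …, N}. Then the final iterate satisfies all constraints: u⁽ᴺ⁾ ∈ H₁ ∩ ⋯ ∩ H_N. -/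
open scoped RealInnerProductSpace

/-- The closed-form halfspace projection operator. -/
noncomputable def halfspaceProj {m : ℕ} (A : EuclideanSpace ℝ (Fin m)) (c : ℝ)
    (u : EuclideanSpace ℝ (Fin m)) : EuclideanSpace ℝ (Fin m) :=
  u + (max 0 (c - ⟪A, u⟫) / ‖A‖ ^ 2) • A

lemma inner_halfspaceProj_ge {m : ℕ} (A B : EuclideanSpace ℝ (Fin m)) (c : ℝ)
    (u : EuclideanSpace ℝ (Fin m)) (h : ⟪B, A⟫ ≥ 0) :
    ⟪B, halfspaceProj A c u⟫ ≥ ⟪B, u⟫ := by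
  unfold halfspaceProj
  rw [inner_add_right, real_inner_smul_right]
  have h1 : (0:ℝ) ≤ max 0 (c - ⟪A, u⟫) / ‖A‖ ^ 2 := by positivity
  nlinarith

lemma inner_halfspaceProj_self {m : ℕ} (A : EuclideanSpace ℝ (Fin m)) (hA : A ≠ 0)
    (c : ℝ) (u : EuclideanSpace ℝ (Fin m)) :
    ⟪A, halfspaceProj A c u⟫ ≥ c := by
  unfold halfspaceProj
  rw [inner_add_right, real_inner_smul_right, real_inner_self_eq_norm_sq]
  have hn : ‖A‖ ^ 2 ≠ 0 := pow_ne_zero _ (norm_ne_zero_iff.mpr hA)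
  rw [div_mul_cancel₀ _ hn]
  rcases le_or_gt (c - ⟪A, u⟫) 0 with h | h
  · rw [max_eq_left h]; linarith
  · rw [max_eq_right h.le]; linarith

/-- feasibility of sequential projection under pairwise
compatibility: if all distinct pairs of constraint normals satisfy
`⟨Aᵢ, Aⱼ⟩ ≥ 0`, then sequentially projecting along any permutation `σ` of the
constraints yields an iterate satisfying all constraints. -/
theorem sequential_projection_feasible {m N : ℕ}
    (A : Fin N → EuclideanSpace ℝ (Fin m)) (c : Fin N → ℝ)
    (hA : ∀ i, A i ≠ 0)
    (hcompat : ∀ i j, i ≠ j → ⟪A i, A j⟫ ≥ 0)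
    (H : Fin N → Set (EuclideanSpace ℝ (Fin m)))
    (hH : ∀ i, H i = {v : EuclideanSpace ℝ (Fin m) | ⟪A i, v⟫ ≥ c i})
    (σ : Equiv.Perm (Fin N))
    (u : EuclideanSpace ℝ (Fin m))
    (useq : ℕ → EuclideanSpace ℝ (Fin m))
    (h0 : useq 0 = u)
    (hstep : ∀ k : Fin N, useq (k + 1) = halfspaceProj (A (σ k)) (c (σ k)) (useq k)) :
    useq N ∈ ⋂ i, H i := by
  simp only [Set.mem_iInter, hH, Set.mem_setOf_eq]
  intro i
  set k : Fin N := σ.symm i with hk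
  have key : ∀ n : ℕ, (k : ℕ) + 1 ≤ n → n ≤ N → ⟪A i, useq n⟫ ≥ c i := by
    intro n hn1 hn2
    induction n with
    | zero => omega
    | succ n ih =>
      rcases eq_or_lt_of_le hn1 with heq | hlt
      · -- n = k, base case
        have hnk : n = (k : ℕ) := by omega
        rw [hnk, hstep k, hk, Equiv.apply_symm_apply]
        exact inner_halfspaceProj_self (A i) (hA i) (c i) _
      · have hnN : n < N := by omega
        have ih' := ih (by omega) (by omega)
        have hs := hstep ⟨n, hnN⟩
        simp only [Fin.val_mk] at hs
        rw [hs]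
        have hpos : ⟪A i, A (σ ⟨n, hnN⟩)⟫ ≥ 0 := by
          rcases eq_or_ne i (σ ⟨n, hnN⟩) with h | h
          · rw [← h]; exact real_inner_self_nonneg
          · exact hcompat _ _ h
        calc c i ≤ ⟪A i, useq n⟫ := ih'
          _ ≤ ⟪A i, halfspaceProj (A (σ ⟨n, hnN⟩)) (c (σ ⟨n, hnN⟩)) (useq n)⟫ :=
            inner_halfspaceProj_ge _ _ _ _ hpos
  exact key N (by omega) le_rfl
end

section
/- Order-robust feasibility under pairwise compatibility with mixing: let A₁, …, A_N ∈ ℝ^m be nonzero with ⟨Aᵢ, Aⱼ⟩ ≥ 0 for all i ≠ j and c₁, …, c_N ∈ ℝ, with halfspaces Hᵢ and projections Πᵢ as below. For each of K permutations σ₁, …, σ_K of {1, …, N} and nominal controls u₁, …, u_K ∈ ℝ^m, let u_r^out be the result of sequentially applying Π_{σ_r(1)}, …, Π_{σ_r(N)} to u_r. Then for any convex weights θ₁, …, θ_K ≥ 0 with Σ_r θ_r = 1, the mixed control ū = Σ_r θ_r u_r^out satisfies all constraints: ū ∈ H₁ ∩ ⋯ ∩ H_N. -/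
open scoped RealInnerProductSpace

/-- Sequential projection of `u` along the permutation `σ` of the `N`
constraints: applies `Π_{σ(1)}, …, Π_{σ(N)}` in turn starting from `u`. -/
noncomputable def seqProj {m N : ℕ}
    (A : Fin N → EuclideanSpace ℝ (Fin m)) (c : Fin N → ℝ)
    (σ : Equiv.Perm (Fin N)) (u : EuclideanSpace ℝ (Fin m)) :
    ℕ → EuclideanSpace ℝ (Fin m)
  | 0 => u
  | k + 1 =>
      if h : k < N then
        halfspaceProj (A (σ ⟨k, h⟩)) (c (σ ⟨k, h⟩)) (seqProj A c σ u k)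
      else seqProj A c σ u k

lemma proj_self {m : ℕ} (A : EuclideanSpace ℝ (Fin m)) (c : ℝ) (hA : A ≠ 0)
    (u : EuclideanSpace ℝ (Fin m)) : ⟪A, halfspaceProj A c u⟫ ≥ c := by
  have hn : ‖A‖ ^ 2 ≠ 0 := pow_ne_zero 2 (norm_ne_zero_iff.mpr hA)
  simp only [halfspaceProj, inner_add_right, real_inner_smul_right,
    real_inner_self_eq_norm_sq]
  rw [div_mul_cancel₀ _ hn]
  linarith [le_max_right (0 : ℝ) (c - ⟪A, u⟫)]

lemma proj_mono {m : ℕ} (A B : EuclideanSpace ℝ (Fin m)) (c : ℝ)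
    (h : ⟪B, A⟫ ≥ 0) (u : EuclideanSpace ℝ (Fin m)) :
    ⟪B, halfspaceProj A c u⟫ ≥ ⟪B, u⟫ := by
  simp only [halfspaceProj, inner_add_right, real_inner_smul_right]
  have h1 : 0 ≤ max 0 (c - ⟪A, u⟫) / ‖A‖ ^ 2 := by positivity
  nlinarith

lemma seq_feasible {m N : ℕ}
    (A : Fin N → EuclideanSpace ℝ (Fin m)) (c : Fin N → ℝ)
    (hA : ∀ i, A i ≠ 0)
    (hcompat : ∀ i j, i ≠ j → ⟪A i, A j⟫ ≥ 0)
    (σ : Equiv.Perm (Fin N)) (u : EuclideanSpace ℝ (Fin m)) :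
    ∀ k : ℕ, ∀ j : Fin N, (j : ℕ) < k →
      ⟪A (σ j), seqProj A c σ u k⟫ ≥ c (σ j) := by
  intro k
  induction k with
  | zero => intro j hj; omega
  | succ k ih =>
    intro j hj
    by_cases hk : k < N
    · simp only [seqProj, dif_pos hk]
      rcases Nat.lt_succ_iff_lt_or_eq.mp hj with h | h
      · by_cases hje : σ j = σ ⟨k, hk⟩
        · rw [hje]; exact proj_self _ _ (hA _) _
        · exact le_trans (ih j h) (proj_mono _ _ _ (hcompat _ _ hje) _)
      · have : j = ⟨k, hk⟩ := Fin.ext h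
        rw [this]; exact proj_self _ _ (hA _) _
    · have hjk : (j : ℕ) < k := lt_of_lt_of_le j.is_lt (not_lt.mp hk)
      simp only [seqProj, dif_neg hk]
      exact ih j hjk

/-- order-robust feasibility under pairwise compatibility with
mixing: if all distinct normals satisfy `⟨Aᵢ, Aⱼ⟩ ≥ 0`, then any convex
mixture of the outputs of sequential projections (each along its own
permutation, from its own nominal control) satisfies all constraints. -/
theorem mixed_sequential_projection_feasible {m N K : ℕ}
    (A : Fin N → EuclideanSpace ℝ (Fin m)) (c : Fin N → ℝ)
    (hA : ∀ i, A i ≠ 0)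
    (hcompat : ∀ i j, i ≠ j → ⟪A i, A j⟫ ≥ 0)
    (H : Fin N → Set (EuclideanSpace ℝ (Fin m)))
    (hH : ∀ i, H i = {v : EuclideanSpace ℝ (Fin m) | ⟪A i, v⟫ ≥ c i})
    (σ : Fin K → Equiv.Perm (Fin N))
    (u : Fin K → EuclideanSpace ℝ (Fin m))
    (θ : Fin K → ℝ) (hθ : ∀ r, 0 ≤ θ r) (hsum : ∑ r, θ r = 1) :
    (∑ r, θ r • seqProj A c (σ r) (u r) N) ∈ ⋂ i, H i := by
  rw [Set.mem_iInter]
  intro i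
  rw [hH i]
  have key : ∀ r : Fin K, ⟪A i, seqProj A c (σ r) (u r) N⟫ ≥ c i := by
    intro r
    have := seq_feasible A c hA hcompat (σ r) (u r) N ((σ r).symm i)
      ((σ r).symm i).is_lt
    simpa using this
  show ⟪A i, ∑ r, θ r • seqProj A c (σ r) (u r) N⟫ ≥ c i
  rw [inner_sum]
  simp only [real_inner_smul_right]
  calc c i = ∑ r, θ r * c i := by rw [← Finset.sum_mul, hsum, one_mul]
    _ ≤ ∑ r, θ r * ⟪A i, seqProj A c (σ r) (u r) N⟫ :=
        Finset.sum_le_sum fun r _ => mul_le_mul_of_nonneg_left (key r) (hθ r)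
end
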